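/- arXiv:1602.01867 — 3 statements merged into one kernel-verified Lean document; each statement's English description precedes it below -/
import Mathlib

section
/- Let G be a finite simple graph on vertex set V, let l be a positive natural number, and let s₄ be a positive real number with s₄·l < 1. Then there exists a partition of V into four independent sets I₁, I₂, I₃, I₄ with |I₁| ≤ l, |I₂| ≤ l, |I₃| ≤ l and |I₄|/s₄ ≤ l if and only if there exists a partition of V into three independent sets each of size at most l. (This is the correctness of the reduction showing NP-hardness of scheduling unit jobs on four uniform machines with speeds 1, 1, 1, s₄ and a bipartite incompatibility graph.) -/
/-! Since `s₄ · l < 1`, the slow machine cannot complete a single unit job within time `l`,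
so `I₄` is empty and four-set schedules are exactly three-set schedules. -/

/-- A finset of vertices is independent: no two of its members are adjacent. -/
def IsIndep {V : Type*} (G : SimpleGraph V) (s : Finset V) : Prop :=
  ∀ u ∈ s, ∀ v ∈ s, ¬ G.Adj u v

theorem Nat.eq_zero_of_cast_div_le {n l : ℕ} {s : ℝ} (hs : 0 < s) (hsl : s * l < 1)
    (h : (n : ℝ) / s ≤ l) : n = 0 := by
  have hn : (n : ℝ) < 1 := by
    rw [div_le_iff₀ hs] at h
    linarith
  exact Nat.lt_one_iff.mp (by exact_mod_cast hn)

theorem isIndep_empty {V : Type*} (G : SimpleGraph V) : IsIndep G ∅ := by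
  simp [IsIndep]

theorem stmt_4_general {V : Type*} [Fintype V] [DecidableEq V] (G : SimpleGraph V)
    (l : ℕ) (s₄ : ℝ) (hs₄ : 0 < s₄) (hsl : s₄ * l < 1) :
    (∃ I₁ I₂ I₃ I₄ : Finset V,
      IsIndep G I₁ ∧ IsIndep G I₂ ∧ IsIndep G I₃ ∧ IsIndep G I₄ ∧
      Disjoint I₁ I₂ ∧ Disjoint I₁ I₃ ∧ Disjoint I₁ I₄ ∧
      Disjoint I₂ I₃ ∧ Disjoint I₂ I₄ ∧ Disjoint I₃ I₄ ∧
      I₁ ∪ I₂ ∪ I₃ ∪ I₄ = Finset.univ ∧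
      I₁.card ≤ l ∧ I₂.card ≤ l ∧ I₃.card ≤ l ∧ (I₄.card : ℝ) / s₄ ≤ l) ↔
    (∃ J₁ J₂ J₃ : Finset V,
      IsIndep G J₁ ∧ IsIndep G J₂ ∧ IsIndep G J₃ ∧
      Disjoint J₁ J₂ ∧ Disjoint J₁ J₃ ∧ Disjoint J₂ J₃ ∧
      J₁ ∪ J₂ ∪ J₃ = Finset.univ ∧
      J₁.card ≤ l ∧ J₂.card ≤ l ∧ J₃.card ≤ l) := by
  constructor
  · rintro ⟨I₁, I₂, I₃, I₄, h₁, h₂, h₃, -, d₁₂, d₁₃, -, d₂₃, -, -, hcover, c₁, c₂, c₃, c₄⟩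
    have hI₄ : I₄ = ∅ := Finset.card_eq_zero.mp (Nat.eq_zero_of_cast_div_le hs₄ hsl c₄)
    subst hI₄
    exact ⟨I₁, I₂, I₃, h₁, h₂, h₃, d₁₂, d₁₃, d₂₃, by simpa using hcover, c₁, c₂, c₃⟩
  · rintro ⟨J₁, J₂, J₃, h₁, h₂, h₃, d₁₂, d₁₃, d₂₃, hcover, c₁, c₂, c₃⟩
    refine ⟨J₁, J₂, J₃, ∅, h₁, h₂, h₃, isIndep_empty G, d₁₂, d₁₃, Finset.disjoint_empty_right _,
      d₂₃, Finset.disjoint_empty_right _, Finset.disjoint_empty_right _, by simpa using hcover,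
      c₁, c₂, c₃, by simp⟩

/-- Correctness of the NP-hardness reduction: for a finite simple graph `G`, a positive
integer `l` and a positive real `s₄` with `s₄·l < 1`, there is a partition of the vertex set
into four independent sets `I₁, I₂, I₃, I₄` with `|I₁| ≤ l`, `|I₂| ≤ l`, `|I₃| ≤ l` and
`|I₄|/s₄ ≤ l` (a schedule of length at most `l` on machines of speeds `1,1,1,s₄`) if and
only if there is a partition of the vertex set into three independent sets each of size at
most `l`. -/
theorem stmt_4 {V : Type*} [Fintype V] [DecidableEq V] (G : SimpleGraph V)
    (l : ℕ) (hl : 0 < l) (s₄ : ℝ) (hs₄ : 0 < s₄) (hsl : s₄ * l < 1) :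
    (∃ I₁ I₂ I₃ I₄ : Finset V,
      IsIndep G I₁ ∧ IsIndep G I₂ ∧ IsIndep G I₃ ∧ IsIndep G I₄ ∧
      Disjoint I₁ I₂ ∧ Disjoint I₁ I₃ ∧ Disjoint I₁ I₄ ∧
      Disjoint I₂ I₃ ∧ Disjoint I₂ I₄ ∧ Disjoint I₃ I₄ ∧
      I₁ ∪ I₂ ∪ I₃ ∪ I₄ = Finset.univ ∧
      I₁.card ≤ l ∧ I₂.card ≤ l ∧ I₃.card ≤ l ∧ (I₄.card : ℝ) / s₄ ≤ l) ↔
    (∃ J₁ J₂ J₃ : Finset V,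
      IsIndep G J₁ ∧ IsIndep G J₂ ∧ IsIndep G J₃ ∧
      Disjoint J₁ J₂ ∧ Disjoint J₁ J₃ ∧ Disjoint J₂ J₃ ∧
      J₁ ∪ J₂ ∪ J₃ = Finset.univ ∧
      J₁.card ≤ l ∧ J₂.card ≤ l ∧ J₃.card ≤ l) :=
  stmt_4_general G l s₄ hs₄ hsl
end

section
/- Let G be a bipartite finite simple graph on n vertices with no isolated vertices and maximum degree Δ(G) ≤ 4, and let s, s₁ be positive real numbers with s₁ ≥ 2·s. Then max(α(G)/s₁, ⌈(n − α(G))/3⌉/s) ≤ 2·OPT, where OPT is the minimum over all partitions of the vertex set of G into four independent sets I₁, I₂, I₃, I₄ of the makespan max(|I₁|/s₁, |I₂|/s, |I₃|/s, |I₄|/s). (In other words, scheduling a maximum independent set on the fast machine and spreading the remaining jobs equitably over the three slow machines is a 2-approximation when s₁ ≥ 2s₂ and s₂ = s₃ = s₄.) -/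
/-- The independence number: the maximum size of an independent set. -/
noncomputable def alpha {V : Type*} [Fintype V] (G : SimpleGraph V) : ℕ :=
  sSup {n | ∃ s : Finset V, IsIndep G s ∧ s.card = n}

open Finset

section Independence

variable {V : Type*} [Fintype V] {G : SimpleGraph V}

lemma bddAbove_card_isIndep : BddAbove {n | ∃ s : Finset V, IsIndep G s ∧ s.card = n} :=
  ⟨Fintype.card V, by rintro _ ⟨t, -, rfl⟩; exact card_le_univ t⟩

lemma IsIndep.card_le_alpha {t : Finset V} (ht : IsIndep G t) : t.card ≤ alpha G :=
  le_csSup bddAbove_card_isIndep ⟨t, ht, rfl⟩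

lemma exists_isIndep_card_eq_alpha (G : SimpleGraph V) : ∃ S, IsIndep G S ∧ S.card = alpha G :=
  Nat.sSup_mem (s := {n | ∃ s : Finset V, IsIndep G s ∧ s.card = n}) ⟨0, ∅, by simp [IsIndep], rfl⟩
    bddAbove_card_isIndep

variable [DecidableEq V] [DecidableRel G.Adj]

lemma IsIndep.card_le_mul_card_compl {d : ℕ} (hiso : ∀ v, ∃ w, G.Adj v w)
    (hΔ : G.maxDegree ≤ d) {S : Finset V} (hS : IsIndep G S) : S.card ≤ d * Sᶜ.card := by
  have hcount := card_mul_le_card_mul (s := S) (t := Sᶜ) (m := 1) (n := d) G.Adj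
    (fun v hv => by
      obtain ⟨w, hvw⟩ := hiso v
      have hw : w ∉ S := fun hw => hS v hv w hw hvw
      exact one_le_card.2 ⟨w, (mem_bipartiteAbove G.Adj).2 ⟨mem_compl.2 hw, hvw⟩⟩)
    (fun w _ => calc
      (S.bipartiteBelow G.Adj w).card ≤ (G.neighborFinset w).card :=
        card_le_card fun v hv => by simpa [G.adj_comm] using ((mem_bipartiteBelow G.Adj).1 hv).2
      _ ≤ d := (G.card_neighborFinset_eq_degree w ▸ G.degree_le_maxDegree w).trans hΔ)
  simpa [mul_comm] using hcount

lemma succ_mul_alpha_le {d : ℕ} (hiso : ∀ v, ∃ w, G.Adj v w) (hΔ : G.maxDegree ≤ d) :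
    (d + 1) * alpha G ≤ d * Fintype.card V := by
  obtain ⟨S, hS, hcard⟩ := exists_isIndep_card_eq_alpha G
  have hcompl := hS.card_le_mul_card_compl hiso hΔ
  rw [← card_add_card_compl S, ← hcard]
  nlinarith

end Independence

noncomputable def makespan (s₁ s : ℝ) (a b c d : ℕ) : ℝ :=
  max (max ((a : ℝ) / s₁) ((b : ℝ) / s)) (max ((c : ℝ) / s) ((d : ℝ) / s))

section Makespan

variable {s s₁ : ℝ} {a b c d : ℕ}

lemma le_makespan_mul_fast (hs₁ : 0 < s₁) : (a : ℝ) ≤ makespan s₁ s a b c d * s₁ :=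
  (div_le_iff₀ hs₁).1 <| (le_max_left _ _).trans (le_max_left _ _)

lemma max_div_slow_le_makespan :
    max ((b : ℝ) / s) (max ((c : ℝ) / s) ((d : ℝ) / s)) ≤ makespan s₁ s a b c d :=
  max_le ((le_max_right _ _).trans (le_max_left _ _))
    (max_le ((le_max_left _ _).trans (le_max_right _ _))
      ((le_max_right _ _).trans (le_max_right _ _)))

lemma makespan_nonneg (hs : 0 < s) : 0 ≤ makespan s₁ s a b c d :=
  (div_nonneg (Nat.cast_nonneg b) hs.le).trans ((le_max_left _ _).trans max_div_slow_le_makespan)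

lemma slow_le_makespan_mul (hs : 0 < s) :
    (b : ℝ) ≤ makespan s₁ s a b c d * s ∧ (c : ℝ) ≤ makespan s₁ s a b c d * s ∧
      (d : ℝ) ≤ makespan s₁ s a b c d * s := by
  have h : max ((b : ℝ) / s) (max ((c : ℝ) / s) ((d : ℝ) / s)) ≤ makespan s₁ s a b c d :=
    max_div_slow_le_makespan
  simp only [max_le_iff] at h
  exact ⟨(div_le_iff₀ hs).1 h.1, (div_le_iff₀ hs).1 h.2.1, (div_le_iff₀ hs).1 h.2.2⟩

lemma div_fast_le_two_mul_makespan {α n : ℕ} (hs : 0 < s) (hs₁ : 0 < s₁) (hfast : 2 * s ≤ s₁)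
    (hα : 5 * α ≤ 4 * n) (hn : n ≤ a + b + c + d) :
    (α : ℝ) / s₁ ≤ 2 * makespan s₁ s a b c d := by
  set M := makespan s₁ s a b c d
  have ha : (a : ℝ) ≤ M * s₁ := le_makespan_mul_fast hs₁
  obtain ⟨hb, hc, hd⟩ : (b : ℝ) ≤ M * s ∧ (c : ℝ) ≤ M * s ∧ (d : ℝ) ≤ M * s :=
    slow_le_makespan_mul hs
  have hM : 0 ≤ M := makespan_nonneg hs
  have hαr : (5 : ℝ) * α ≤ 4 * n := by exact_mod_cast hα
  have hnr : (n : ℝ) ≤ a + b + c + d := by exact_mod_cast hn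
  rw [div_le_iff₀ hs₁]
  nlinarith [mul_le_mul_of_nonneg_left hfast hM]

lemma ceil_div_three_div_slow_le_makespan {k : ℕ} (hs : 0 < s) (hk : k ≤ b + c + d) :
    (⌈(k : ℚ) / 3⌉ : ℝ) / s ≤ makespan s₁ s a b c d := by
  have hceil : ⌈(k : ℚ) / 3⌉ ≤ (max b (max c d) : ℕ) := by
    rw [Int.ceil_le, div_le_iff₀ (by norm_num)]
    exact_mod_cast (show k ≤ max b (max c d) * 3 by omega)
  have hceilr : (⌈(k : ℚ) / 3⌉ : ℝ) ≤ max (b : ℝ) (max (c : ℝ) d) := by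
    exact_mod_cast hceil
  calc (⌈(k : ℚ) / 3⌉ : ℝ) / s ≤ max (b : ℝ) (max (c : ℝ) d) / s := by gcongr
    _ = max ((b : ℝ) / s) (max ((c : ℝ) / s) ((d : ℝ) / s)) := by
      rw [max_div_div_right hs.le, max_div_div_right hs.le]
    _ ≤ makespan s₁ s a b c d := max_div_slow_le_makespan

end Makespan

theorem stmt_7_general {V : Type*} [Fintype V] [DecidableEq V] (G : SimpleGraph V)
    [DecidableRel G.Adj]
    (hiso : ∀ v : V, ∃ w : V, G.Adj v w) (hΔ : G.maxDegree ≤ 4)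
    (s s₁ : ℝ) (hs : 0 < s) (hs₁ : 0 < s₁) (hfast : 2 * s ≤ s₁) :
    ∀ I₁ I₂ I₃ I₄ : Finset V,
      IsIndep G I₁ → IsIndep G I₂ → IsIndep G I₃ → IsIndep G I₄ →
      Disjoint I₁ I₂ → Disjoint I₁ I₃ → Disjoint I₁ I₄ →
      Disjoint I₂ I₃ → Disjoint I₂ I₄ → Disjoint I₃ I₄ →
      I₁ ∪ I₂ ∪ I₃ ∪ I₄ = Finset.univ →
      max ((alpha G : ℝ) / s₁) ((⌈((Fintype.card V - alpha G : ℕ) : ℚ) / 3⌉ : ℝ) / s) ≤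
        2 * max (max ((I₁.card : ℝ) / s₁) ((I₂.card : ℝ) / s))
                (max ((I₃.card : ℝ) / s) ((I₄.card : ℝ) / s)) := by
  intro I₁ I₂ I₃ I₄ h₁ _ _ _ _ _ _ _ _ _ hcover
  have hn : Fintype.card V ≤ I₁.card + I₂.card + I₃.card + I₄.card := by
    rw [← card_univ, ← hcover]
    exact (card_union_le _ _).trans <| Nat.add_le_add_right
      ((card_union_le _ _).trans <| Nat.add_le_add_right (card_union_le _ _) _) _
  have hα : 5 * alpha G ≤ 4 * Fintype.card V := succ_mul_alpha_le hiso hΔ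
  have h₁α := h₁.card_le_alpha
  exact max_le (div_fast_le_two_mul_makespan hs hs₁ hfast hα hn)
    ((ceil_div_three_div_slow_le_makespan hs (by omega)).trans
      (le_mul_of_one_le_left (makespan_nonneg hs) one_le_two))

/-- For a bipartite finite simple graph `G` on `n` vertices with no isolated vertices and
maximum degree at most 4, and speeds `s₁ ≥ 2·s` with `s, s₁ > 0`, the schedule that puts a
maximum independent set on the fast machine and spreads the remaining jobs equitably over
the three slow machines has makespan `max(α(G)/s₁, ⌈(n − α(G))/3⌉/s)` at most twice the
optimal makespan: it is at most `2 ·` the makespan of every partition of the vertex set into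
four independent sets. -/
theorem stmt_7 {V : Type*} [Fintype V] [DecidableEq V] (G : SimpleGraph V)
    [DecidableRel G.Adj] (hbip : G.Colorable 2)
    (hiso : ∀ v : V, ∃ w : V, G.Adj v w) (hΔ : G.maxDegree ≤ 4)
    (s s₁ : ℝ) (hs : 0 < s) (hs₁ : 0 < s₁) (hfast : 2 * s ≤ s₁) :
    ∀ I₁ I₂ I₃ I₄ : Finset V,
      IsIndep G I₁ → IsIndep G I₂ → IsIndep G I₃ → IsIndep G I₄ →
      Disjoint I₁ I₂ → Disjoint I₁ I₃ → Disjoint I₁ I₄ →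
      Disjoint I₂ I₃ → Disjoint I₂ I₄ → Disjoint I₃ I₄ →
      I₁ ∪ I₂ ∪ I₃ ∪ I₄ = Finset.univ →
      max ((alpha G : ℝ) / s₁) ((⌈((Fintype.card V - alpha G : ℕ) : ℚ) / 3⌉ : ℝ) / s) ≤
        2 * max (max ((I₁.card : ℝ) / s₁) ((I₂.card : ℝ) / s))
                (max ((I₃.card : ℝ) / s) ((I₄.card : ℝ) / s)) :=
  stmt_7_general G hiso hΔ s s₁ hs hs₁ hfast
end

section
/- Let G be a bipartite finite simple graph with maximum degree Δ(G) ≤ 2. Then the vertex set of G can be partitioned into two independent sets whose sizes differ by at most 1 (an equitable 2-coloring). -/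
open Finset

def imbalance {V : Type*} (c : V → Bool) (s : Finset V) : ℤ :=
  ∑ v ∈ s, if c v then 1 else -1

lemma imbalance_eq_card_sub_card {V : Type*} (c : V → Bool) (s : Finset V) :
    imbalance c s = #{v ∈ s | c v = true} - #{v ∈ s | c v = false} := by
  simp [imbalance, sum_ite, sub_eq_add_neg]

namespace SimpleGraph

lemma Connected.card_le_two_mul_card_add_one {W : Type*} [Fintype W] {H : SimpleGraph W}
    [DecidableRel H.Adj] (hH : H.Connected) {s t : Finset W} (hst : H.IsBipartiteWith s t)
    (hdeg : ∀ v ∈ t, H.degree v ≤ 2) : Fintype.card W ≤ 2 * #t + 1 := by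
  have hcard := hH.card_vert_le_card_edgeSet_add_one
  rw [Nat.card_eq_fintype_card, Nat.card_eq_fintype_card, ← edgeFinset_card,
    ← isBipartiteWith_sum_degrees_eq_card_edges' hst] at hcard
  have hsum := sum_le_card_nsmul t _ 2 hdeg
  rw [smul_eq_mul] at hsum
  omega

variable {V : Type*} {G : SimpleGraph V}

def Coloring.flipComponent [DecidableEq G.ConnectedComponent] (c : G.Coloring Bool)
    (C : G.ConnectedComponent) : G.Coloring Bool :=
  Coloring.mk (fun v => if G.connectedComponentMk v = C then !c v else c v) fun {u v} huv => by
    rw [ConnectedComponent.connectedComponentMk_eq_of_adj huv]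
    split_ifs <;> simpa using c.valid huv

lemma Coloring.flipComponent_apply [DecidableEq G.ConnectedComponent] (c : G.Coloring Bool)
    (C : G.ConnectedComponent) (v : V) :
    c.flipComponent C v = if G.connectedComponentMk v = C then !c v else c v :=
  rfl

variable [Fintype V]

lemma Coloring.isIndep_filter_eq {α : Type*} [DecidableEq α] (c : G.Coloring α) (a : α) :
    IsIndep G {v | c v = a} := by
  intro u hu v hv huv
  simp only [mem_filter, mem_univ, true_and] at hu hv
  exact c.valid huv (hu.trans hv.symm)

lemma ConnectedComponent.card_filter_eq (C : G.ConnectedComponent) [Fintype C]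
    [DecidableEq G.ConnectedComponent] (p : V → Prop) [DecidablePred p] :
    #({v | p v} : Finset C) = #{v | G.connectedComponentMk v = C ∧ p v} := by
  rw [← card_map (Function.Embedding.subtype _)]
  congr 1
  ext v
  simp only [mem_map, mem_filter, mem_univ, true_and, Function.Embedding.subtype_apply]
  exact ⟨fun ⟨w, hw, hwv⟩ => hwv ▸ ⟨w.2, hw⟩, fun ⟨hv, hp⟩ => ⟨⟨v, hv⟩, hp, rfl⟩⟩

lemma imbalance_flipComponent [DecidableEq G.ConnectedComponent] (c : G.Coloring Bool)
    (C : G.ConnectedComponent) :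
    imbalance (c.flipComponent C) univ =
      imbalance c univ - 2 * imbalance c {v | G.connectedComponentMk v = C} := by
  rw [imbalance, imbalance, imbalance, sum_filter, mul_sum, ← sum_sub_distrib]
  refine sum_congr rfl fun v _ => ?_
  rw [Coloring.flipComponent_apply]
  split_ifs <;> cases c v <;> simp_all

variable [DecidableRel G.Adj]

lemma ConnectedComponent.degree_toSimpleGraph (C : G.ConnectedComponent) (v : C)
    [Fintype (C.toSimpleGraph.neighborSet v)] : C.toSimpleGraph.degree v = G.degree v := by
  classical
  convert degree_induce_of_neighborSet_subset (s := C.supp) (v := v)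
    fun w hw => C.mem_supp_of_adj_mem_supp v.2 hw
  · exact Iff.rfl
  · rfl

lemma ConnectedComponent.card_color_le [DecidableEq G.ConnectedComponent]
    (C : G.ConnectedComponent) (c : G.Coloring Bool) (hdeg : ∀ v, G.degree v ≤ 2) (b : Bool) :
    #{v | G.connectedComponentMk v = C ∧ c v = b} ≤
      #{v | G.connectedComponentMk v = C ∧ c v ≠ b} + 1 := by
  classical
  have hbip : C.toSimpleGraph.IsBipartiteWith
      ↑({v | c v = b} : Finset C) ↑({v | c v ≠ b} : Finset C) := by
    refine ⟨disjoint_coe.2 (disjoint_filter_filter_not _ _ _), fun u v huv => ?_⟩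
    have := c.valid huv
    simp only [coe_filter, mem_univ, true_and, Set.mem_ofPred_eq]
    cases hu : c u <;> cases hv : c v <;> cases b <;> simp_all
  have key := C.connected_toSimpleGraph.card_le_two_mul_card_add_one hbip fun v _ =>
    (C.degree_toSimpleGraph v).trans_le (hdeg v)
  rw [← card_univ, ← card_filter_add_card_filter_not (fun v : C => c v = b),
    C.card_filter_eq (c · = b), C.card_filter_eq (¬c · = b)] at key
  simp only [ne_eq]
  omega

lemma ConnectedComponent.abs_imbalance_le_one [DecidableEq G.ConnectedComponent]
    (C : G.ConnectedComponent) (c : G.Coloring Bool) (hdeg : ∀ v, G.degree v ≤ 2) :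
    |imbalance c {v | G.connectedComponentMk v = C}| ≤ 1 := by
  have htrue := C.card_color_le c hdeg true
  have hfalse := C.card_color_le c hdeg false
  simp only [ne_eq, Bool.not_eq_true, Bool.not_eq_false] at htrue hfalse
  rw [imbalance_eq_card_sub_card, filter_filter, filter_filter, abs_le]
  omega

lemma exists_natAbs_imbalance_lt [DecidableEq G.ConnectedComponent] (c : G.Coloring Bool)
    (hdeg : ∀ v, G.degree v ≤ 2) (hc : 1 < (imbalance c univ).natAbs) :
    ∃ c' : G.Coloring Bool, (imbalance c' univ).natAbs < (imbalance c univ).natAbs := by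
  have hsum : ∑ C, imbalance c {v | G.connectedComponentMk v = C} = imbalance c univ :=
    sum_fiberwise univ _ _
  rcases lt_or_gt_of_ne (show imbalance c univ ≠ 0 by omega) with hneg | hpos
  · obtain ⟨C, -, hC⟩ := exists_lt_of_sum_lt (s := univ) (g := fun _ => (0 : ℤ))
      (by rwa [hsum, sum_const_zero])
    have := abs_le.1 (C.abs_imbalance_le_one c hdeg)
    exact ⟨c.flipComponent C, by rw [imbalance_flipComponent]; omega⟩
  · obtain ⟨C, -, hC⟩ := exists_lt_of_sum_lt (s := univ) (f := fun _ => (0 : ℤ))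
      (by rwa [hsum, sum_const_zero])
    have := abs_le.1 (C.abs_imbalance_le_one c hdeg)
    exact ⟨c.flipComponent C, by rw [imbalance_flipComponent]; omega⟩

lemma exists_coloring_natAbs_imbalance_le_one [Nonempty (G.Coloring Bool)]
    (hdeg : ∀ v, G.degree v ≤ 2) :
    ∃ c : G.Coloring Bool, (imbalance c univ).natAbs ≤ 1 := by
  classical
  let f := fun c : G.Coloring Bool => (imbalance c univ).natAbs
  refine ⟨Function.argmin f, not_lt.1 fun h => ?_⟩
  obtain ⟨c', hc'⟩ := exists_natAbs_imbalance_lt _ hdeg h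
  exact hc'.not_ge (Function.argmin_le f c')

end SimpleGraph

/-- Every bipartite finite simple graph with maximum degree at most 2 admits an equitable
2-coloring: a partition of the vertex set into two independent sets whose sizes differ by
at most 1. -/
theorem stmt_16 {V : Type*} [Fintype V] [DecidableEq V] (G : SimpleGraph V)
    [DecidableRel G.Adj] (hbip : G.Colorable 2) (hΔ : G.maxDegree ≤ 2) :
    ∃ A B : Finset V,
      IsIndep G A ∧ IsIndep G B ∧ Disjoint A B ∧ A ∪ B = Finset.univ ∧
      |(A.card : ℤ) - B.card| ≤ 1 := by
  have : Nonempty (G.Coloring Bool) := ⟨G.recolorOfEquiv finTwoEquiv hbip.some⟩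
  obtain ⟨c, hc⟩ :=
    SimpleGraph.exists_coloring_natAbs_imbalance_le_one fun v => (G.degree_le_maxDegree v).trans hΔ
  refine ⟨({v | c v = true} : Finset V), ({v | c v = false} : Finset V),
    c.isIndep_filter_eq true, c.isIndep_filter_eq false,
    disjoint_filter.2 fun v _ h => by simp [h], ?_, ?_⟩
  · ext v
    cases c v <;> simp
  · rw [imbalance_eq_card_sub_card] at hc
    rw [abs_le]
    omega
end
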